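/- Let 0<q<∞ and φ ∈ G_q. Then the following are equivalent: (1) inf_{t>0} φ(t) > 0; (2) every measurable f:ℝⁿ→ℂ with ‖f‖_{M^φ_q} < ∞ is essentially bounded. Moreover, if inf_{t>0} φ(t) > 0, then ‖f‖_{L^∞} ≤ (inf_{t>0} φ(t))^{−1} ‖f‖_{M^φ_q} for every measurable f. -/

import Mathlib

open MeasureTheory Set
open scoped ENNReal NNReal

/-- The generalized Morrey norm `‖f‖_{M^φ_q}` on `ℝⁿ` (cubes realized as closed balls
for the sup metric on `Fin n → ℝ`). -/
noncomputable def morreyNorm (n : ℕ) (q : ℝ) (φ : ℝ → ℝ)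
    (f : (Fin n → ℝ) → ℂ) : ℝ≥0∞ :=
  ⨆ (x : Fin n → ℝ) (r : ℝ) (_ : 0 < r),
    ENNReal.ofReal (φ r) *
      ((volume (Metric.closedBall x r))⁻¹ *
        ∫⁻ y in Metric.closedBall x r, (‖f y‖₊ : ℝ≥0∞) ^ q) ^ (1 / q)

/-- The class `G_q`: nondecreasing functions `φ : (0,∞) → (0,∞)` such that
`t ↦ t^{-n/q} φ(t)` is nonincreasing on `(0,∞)`. -/
def IsGq (n : ℕ) (q : ℝ) (φ : ℝ → ℝ) : Prop :=
  (∀ t, 0 < t → 0 < φ t) ∧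
  (∀ s t, 0 < s → s ≤ t → φ s ≤ φ t) ∧
  (∀ s t, 0 < s → s ≤ t → t ^ (-((n : ℝ) / q)) * φ t ≤ s ^ (-((n : ℝ) / q)) * φ s)

/-!
If `c ≤ φ` on `(0,∞)` with `c > 0`, the Morrey norm bounds every ball average of `|f|^q` by
`(c⁻¹ ‖f‖_{M^φ_q})^q`, and by Besicovitch differentiation `|f|^q` is almost everywhere a limit of
such averages.

Conversely, for `φ ∈ G_q` the indicator of a cube of radius `ρ` has Morrey norm at most `φ(ρ)`:
for balls of radius `r ≤ ρ` use that `φ` is nondecreasing, for `r ≥ ρ` that `t^{-n/q} φ(t)` is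
nonincreasing. The `q`-th power of the Morrey norm of `(∑ aₖ^q 𝟙_{Qₖ})^{1/q}` is therefore at most
`∑ (aₖ φ(ρₖ))^q`. If `inf φ = 0`, choose disjoint cubes `Qₖ` of radii `ρₖ` with `φ(ρₖ) ≤ 4^{-k}` and
`aₖ = 2^k`: the resulting function is unbounded on the cubes but has Morrey norm at most
`(∑ 2^{-kq})^{1/q} < ∞`. In dimension `0` the class `G_q` consists of constants.
-/

open Metric Filter Topology Function

theorem volume_closedBall_fin (n : ℕ) (x : Fin n → ℝ) {r : ℝ} (hr : 0 ≤ r) :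
    volume (closedBall x r) = ENNReal.ofReal ((2 * r) ^ n) := by
  simpa using Real.volume_pi_closedBall x hr

section Morrey

variable {n : ℕ} {q : ℝ} {φ : ℝ → ℝ} {f : (Fin n → ℝ) → ℂ}

theorem le_morreyNorm (x : Fin n → ℝ) {r : ℝ} (hr : 0 < r) :
    ENNReal.ofReal (φ r) *
        ((volume (closedBall x r))⁻¹ * ∫⁻ y in closedBall x r, (‖f y‖₊ : ℝ≥0∞) ^ q) ^ (1 / q) ≤
      morreyNorm n q φ f :=
  le_iSup₂_of_le x r (le_iSup_of_le hr le_rfl)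

theorem morreyNorm_le_of_forall_le (hq : 0 < q) {T : ℝ≥0∞}
    (h : ∀ x r, 0 < r → ENNReal.ofReal (φ r) ^ q *
      ((volume (closedBall x r))⁻¹ * ∫⁻ y in closedBall x r, (‖f y‖₊ : ℝ≥0∞) ^ q) ≤ T) :
    morreyNorm n q φ f ≤ T ^ (1 / q) := by
  refine iSup₂_le fun x r => iSup_le fun hr => ?_
  calc _ = (ENNReal.ofReal (φ r) ^ q * ((volume (closedBall x r))⁻¹ *
          ∫⁻ y in closedBall x r, (‖f y‖₊ : ℝ≥0∞) ^ q)) ^ (1 / q) := by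
        rw [ENNReal.mul_rpow_of_nonneg (_ ^ q) _ (by positivity), one_div,
          ENNReal.rpow_rpow_inv hq.ne']
    _ ≤ T ^ (1 / q) := by gcongr; exact h x r hr

theorem ae_le_of_setLIntegral_closedBall_le {α : Type*} [MetricSpace α] [MeasurableSpace α]
    [BorelSpace α] [SecondCountableTopology α] [HasBesicovitchCovering α]
    (μ : Measure α) [IsLocallyFiniteMeasure μ] {g : α → ℝ≥0∞} (hg : Measurable g) {K : ℝ≥0∞}
    (h : ∀ x r, 0 < r → ∫⁻ y in closedBall x r, g y ∂μ ≤ K * μ (closedBall x r)) :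
    ∀ᵐ x ∂μ, g x ≤ K := by
  rcases eq_or_ne K ⊤ with rfl | hK
  · exact ae_of_all _ fun _ => le_top
  set ν := μ.withDensity g
  have hν : ∀ x r, 0 < r → ν (closedBall x r) ≤ K * μ (closedBall x r) := fun x r hr => by
    rw [withDensity_apply _ measurableSet_closedBall]
    exact h x r hr
  have : IsLocallyFiniteMeasure ν := ⟨fun x => by
    obtain ⟨s, hs, hμs⟩ := μ.finiteAt_nhds x
    obtain ⟨r, hr, hrs⟩ := nhds_basis_closedBall.mem_iff.1 hs
    refine ⟨closedBall x r, closedBall_mem_nhds x hr, (hν x r hr).trans_lt ?_⟩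
    exact ENNReal.mul_lt_top hK.lt_top ((measure_mono hrs).trans_lt hμs)⟩
  filter_upwards [Besicovitch.ae_tendsto_rnDeriv ν μ, Measure.rnDeriv_withDensity μ hg]
    with x hx hgx
  rw [← hgx]
  refine le_of_tendsto hx ?_
  filter_upwards [self_mem_nhdsWithin] with r hr
  exact ENNReal.div_le_of_le_mul (hν x r hr)

theorem setLIntegral_closedBall_le_morreyNorm (hq : 0 < q) {c : ℝ} (hc : 0 < c)
    (hcφ : ∀ t, 0 < t → c ≤ φ t) (x : Fin n → ℝ) {r : ℝ} (hr : 0 < r) :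
    ∫⁻ y in closedBall x r, (‖f y‖₊ : ℝ≥0∞) ^ q ≤
      ((ENNReal.ofReal c)⁻¹ * morreyNorm n q φ f) ^ q * volume (closedBall x r) := by
  set B := closedBall x r
  have hc₀ : ENNReal.ofReal c ≠ 0 := (ENNReal.ofReal_pos.2 hc).ne'
  have hmean : ((volume B)⁻¹ * ∫⁻ y in B, (‖f y‖₊ : ℝ≥0∞) ^ q) ^ (1 / q) ≤
      (ENNReal.ofReal c)⁻¹ * morreyNorm n q φ f := by
    rw [← ENNReal.mul_le_iff_le_inv hc₀ ENNReal.ofReal_ne_top]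
    exact (mul_le_mul_left (ENNReal.ofReal_le_ofReal (hcφ r hr)) _).trans (le_morreyNorm x hr)
  have hmean' := ENNReal.rpow_le_rpow hmean hq.le
  rw [one_div, ENNReal.rpow_inv_rpow hq.ne',
    ENNReal.inv_mul_le_iff (measure_closedBall_pos _ _ hr).ne' measure_closedBall_lt_top.ne]
    at hmean'
  rwa [mul_comm]

theorem essSup_le_inv_mul_morreyNorm (hq : 0 < q) {c : ℝ} (hc : 0 < c)
    (hcφ : ∀ t, 0 < t → c ≤ φ t) (hf : Measurable f) :
    essSup (fun x => (‖f x‖₊ : ℝ≥0∞)) volume ≤ (ENNReal.ofReal c)⁻¹ * morreyNorm n q φ f := by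
  refine essSup_le_of_ae_le _ ?_
  filter_upwards [ae_le_of_setLIntegral_closedBall_le volume (hf.enorm.pow_const q)
    fun x r hr => setLIntegral_closedBall_le_morreyNorm hq hc hcφ x hr] with x hx
  exact (ENNReal.rpow_le_rpow_iff hq).1 hx

end Morrey

theorem exists_ae_norm_le_of_essSup_ne_top {α E : Type*} [MeasurableSpace α] {μ : Measure α}
    [NormedAddCommGroup E] {f : α → E} (hf : essSup (fun x => (‖f x‖₊ : ℝ≥0∞)) μ ≠ ⊤) :
    ∃ C : ℝ, ∀ᵐ x ∂μ, ‖f x‖ ≤ C := by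
  refine ⟨(essSup (fun x => (‖f x‖₊ : ℝ≥0∞)) μ).toReal, ?_⟩
  filter_upwards [ENNReal.ae_le_essSup fun x => (‖f x‖₊ : ℝ≥0∞)] with x hx
  simpa using ENNReal.toReal_mono hf hx

namespace IsGq

variable {n : ℕ} {q : ℝ} {φ : ℝ → ℝ}

theorem rpow_mul_div_pow_le (hφ : IsGq n q φ) (hq : 0 < q) {s t : ℝ} (hs : 0 < s)
    (hst : s ≤ t) : φ t ^ q * (s / t) ^ n ≤ φ s ^ q := by
  have ht := hs.trans_le hst
  have hpow : ∀ u, 0 < u → (u ^ (-((n : ℝ) / q)) * φ u) ^ q = φ u ^ q / u ^ n := fun u hu => by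
    rw [Real.mul_rpow (by positivity) (hφ.1 u hu).le, ← Real.rpow_mul hu.le,
      neg_mul, div_mul_cancel₀ _ hq.ne', Real.rpow_neg hu.le, Real.rpow_natCast,
      inv_mul_eq_div]
  have hdec := Real.rpow_le_rpow (mul_nonneg (by positivity) (hφ.1 t ht).le)
    (hφ.2.2 s t hs hst) hq.le
  rw [hpow t ht, hpow s hs] at hdec
  calc φ t ^ q * (s / t) ^ n = φ t ^ q / t ^ n * s ^ n := by rw [div_pow]; ring
    _ ≤ φ s ^ q / s ^ n * s ^ n := by gcongr
    _ = φ s ^ q := div_mul_cancel₀ _ (by positivity)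

theorem rpow_mul_volume_inter_closedBall_le (hφ : IsGq n q φ) (hq : 0 < q)
    (x c : Fin n → ℝ) {r ρ : ℝ} (hr : 0 < r) (hρ : 0 < ρ) :
    ENNReal.ofReal (φ r) ^ q *
        ((volume (closedBall x r))⁻¹ * volume (closedBall c ρ ∩ closedBall x r)) ≤
      ENNReal.ofReal (φ ρ) ^ q := by
  rcases le_total r ρ with hrρ | hρr
  · calc _ ≤ ENNReal.ofReal (φ r) ^ q * 1 := by
          gcongr
          rw [ENNReal.inv_mul_le_iff (measure_closedBall_pos _ _ hr).ne'
            measure_closedBall_lt_top.ne, mul_one]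
          exact measure_mono inter_subset_right
      _ ≤ ENNReal.ofReal (φ ρ) ^ q := by
          rw [mul_one]; gcongr; exact hφ.2.1 r ρ hr hrρ
  · calc _ ≤ ENNReal.ofReal (φ r) ^ q *
          ((ENNReal.ofReal ((2 * r) ^ n))⁻¹ * ENNReal.ofReal ((2 * ρ) ^ n)) := by
          rw [← volume_closedBall_fin n x hr.le, ← volume_closedBall_fin n c hρ.le]
          gcongr
          exact inter_subset_left
      _ = ENNReal.ofReal (φ r ^ q * (ρ / r) ^ n) := by
          rw [← ENNReal.ofReal_inv_of_pos (by positivity),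
            ← ENNReal.ofReal_mul (inv_nonneg.2 (by positivity)),
            ENNReal.ofReal_rpow_of_nonneg (hφ.1 r hr).le hq.le,
            ← ENNReal.ofReal_mul (Real.rpow_nonneg (hφ.1 r hr).le _), mul_pow, mul_pow, div_pow]
          congr 2
          field_simp
      _ ≤ ENNReal.ofReal (φ ρ ^ q) := ENNReal.ofReal_le_ofReal (hφ.rpow_mul_div_pow_le hq hρ hρr)
      _ = ENNReal.ofReal (φ ρ) ^ q := (ENNReal.ofReal_rpow_of_nonneg (hφ.1 ρ hρ).le hq.le).symm

theorem morreyNorm_le_of_rpow_le_tsum_indicator (hφ : IsGq n q φ) (hq : 0 < q)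
    {ι : Type*} [Countable ι] (c : ι → Fin n → ℝ) {ρ : ι → ℝ} (hρ : ∀ i, 0 < ρ i)
    (a : ι → ℝ≥0∞) {f : (Fin n → ℝ) → ℂ}
    (hf : ∀ y, (‖f y‖₊ : ℝ≥0∞) ^ q ≤
      ∑' i, (closedBall (c i) (ρ i)).indicator (fun _ => a i ^ q) y) :
    morreyNorm n q φ f ≤ (∑' i, (a i * ENNReal.ofReal (φ (ρ i))) ^ q) ^ (1 / q) := by
  refine morreyNorm_le_of_forall_le hq fun x r hr => ?_
  calc _ ≤ ENNReal.ofReal (φ r) ^ q * ((volume (closedBall x r))⁻¹ *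
          ∫⁻ y in closedBall x r,
            ∑' i, (closedBall (c i) (ρ i)).indicator (fun _ => a i ^ q) y) := by
        gcongr with y; exact hf y
    _ = ∑' i, a i ^ q * (ENNReal.ofReal (φ r) ^ q *
          ((volume (closedBall x r))⁻¹ * volume (closedBall (c i) (ρ i) ∩ closedBall x r))) := by
        rw [lintegral_tsum fun i =>
            (measurable_const.indicator measurableSet_closedBall).aemeasurable,
          ← ENNReal.tsum_mul_left, ← ENNReal.tsum_mul_left]
        congr 1 with i
        rw [lintegral_indicator_const measurableSet_closedBall,
          Measure.restrict_apply measurableSet_closedBall]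
        ring
    _ ≤ ∑' i, (a i * ENNReal.ofReal (φ (ρ i))) ^ q := by
        gcongr with i
        rw [ENNReal.mul_rpow_of_nonneg _ _ hq.le]
        gcongr
        exact hφ.rpow_mul_volume_inter_closedBall_le hq x (c i) hr (hρ i)

theorem apply_eq_of_dim_zero (hφ : IsGq 0 q φ) {t : ℝ} (ht : 0 < t) : φ t = φ 1 := by
  have hanti : ∀ s u, 0 < s → s ≤ u → φ u ≤ φ s := fun s u hs hsu => by
    simpa using hφ.2.2 s u hs hsu
  rcases le_total t 1 with h | h
  · exact le_antisymm (hφ.2.1 t 1 ht h) (hanti t 1 ht h)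
  · exact le_antisymm (hanti 1 t one_pos h) (hφ.2.1 1 t one_pos h)

end IsGq

theorem pairwise_disjoint_closedBall_diagonal {n : ℕ} (hn : 0 < n) {ρ : ℕ → ℝ}
    (hρ : ∀ k, ρ k ≤ 1) :
    Pairwise (Disjoint on fun k : ℕ => closedBall (fun _ : Fin n => 3 * (k : ℝ)) (ρ k)) := by
  intro j k hjk
  have : Nonempty (Fin n) := ⟨⟨0, hn⟩⟩
  have hsep : (1 : ℝ) ≤ |(j : ℝ) - k| := by
    exact_mod_cast Int.one_le_abs (sub_ne_zero.2 (Int.natCast_inj.not.2 hjk))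
  apply closedBall_disjoint_closedBall
  rw [dist_pi_const, Real.dist_eq, ← mul_sub, abs_mul, abs_of_pos three_pos]
  linarith [hρ j, hρ k]

theorem tsum_rpow_two_pow_mul_lt_top {q : ℝ} (hq : 0 < q) {b : ℕ → ℝ≥0∞}
    (hb : ∀ k, b k ≤ 4⁻¹ ^ k) : ∑' k, (2 ^ k * b k) ^ q < ⊤ := by
  have hgeom : ∑' k : ℕ, ((2 : ℝ≥0∞)⁻¹ ^ q) ^ k < ⊤ := by
    rw [ENNReal.tsum_geometric, ENNReal.inv_lt_top]
    exact tsub_pos_of_lt (ENNReal.rpow_lt_one (by norm_num) hq)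
  refine lt_of_le_of_lt (ENNReal.tsum_le_tsum fun k => ?_) hgeom
  calc (2 ^ k * b k) ^ q ≤ (2 ^ k * 4⁻¹ ^ k) ^ q := by gcongr; exact hb k
    _ = ((2 : ℝ≥0∞)⁻¹ ^ q) ^ k := by
      rw [← mul_pow, show (4 : ℝ≥0∞) = 2 * 2 by norm_num, ENNReal.mul_inv (by simp) (by simp),
        ← mul_assoc, ENNReal.mul_inv_cancel two_ne_zero ENNReal.ofNat_ne_top, one_mul,
        ← ENNReal.rpow_natCast_mul, mul_comm, ENNReal.rpow_mul_natCast]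

theorem IsGq.exists_not_ae_bounded {n : ℕ} (hn : 0 < n) {q : ℝ} (hq : 0 < q) {φ : ℝ → ℝ}
    (hφ : IsGq n q φ) (hsmall : ∀ ε, 0 < ε → ∃ t, 0 < t ∧ φ t < ε) :
    ∃ f : (Fin n → ℝ) → ℂ, Measurable f ∧ morreyNorm n q φ f < ⊤ ∧
      ∀ C : ℝ, ¬ ∀ᵐ x ∂volume, ‖f x‖ ≤ C := by
  have hρ : ∀ k : ℕ, ∃ ρ, 0 < ρ ∧ ρ ≤ 1 ∧ ENNReal.ofReal (φ ρ) ≤ 4⁻¹ ^ k := fun k => by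
    obtain ⟨t, ht, hφt⟩ := hsmall ((4 : ℝ)⁻¹ ^ k) (by positivity)
    refine ⟨min t 1, lt_min ht one_pos, min_le_right _ _, ?_⟩
    calc ENNReal.ofReal (φ (min t 1)) ≤ ENNReal.ofReal ((4 : ℝ)⁻¹ ^ k) :=
          ENNReal.ofReal_le_ofReal ((hφ.2.1 _ _ (lt_min ht one_pos) (min_le_left _ _)).trans hφt.le)
      _ = 4⁻¹ ^ k := by simp [ENNReal.ofReal_pow, ENNReal.ofReal_inv_of_pos, ENNReal.inv_pow]
  choose ρ hρ₀ hρ₁ hρφ using hρ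
  set Q := fun k : ℕ => closedBall (fun _ : Fin n => 3 * (k : ℝ)) (ρ k)
  -- The `q`-th root of `∑ 2^{kq} 𝟙_{Qₖ}` rather than `∑ 2^k 𝟙_{Qₖ}`: then `|f|^q ≤ h` needs no
  -- disjointness, which is only used to evaluate `f` on `Qₖ`.
  set h := fun y => ∑' k, (Q k).indicator (fun _ => ((2 : ℝ≥0∞) ^ k) ^ q) y
  set f : (Fin n → ℝ) → ℂ := fun y => ((h y ^ (1 / q)).toReal : ℂ)
  have hf_meas : Measurable f := by
    refine Complex.measurable_ofReal.comp (ENNReal.measurable_toReal.comp ?_)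
    exact (Measurable.tsum fun k =>
      measurable_const.indicator measurableSet_closedBall).pow_const _
  have hf_le : ∀ y, (‖f y‖₊ : ℝ≥0∞) ^ q ≤ h y := fun y => by
    calc (‖f y‖₊ : ℝ≥0∞) ^ q ≤ (h y ^ (1 / q)) ^ q := by
          gcongr
          rw [Complex.nnnorm_real, Real.nnnorm_of_nonneg ENNReal.toReal_nonneg]
          exact ENNReal.coe_toNNReal_le_self
      _ = h y := by rw [one_div, ENNReal.rpow_inv_rpow hq.ne']
  have hdisj := pairwise_disjoint_closedBall_diagonal hn hρ₁
  have hf_Q : ∀ k, ∀ y ∈ Q k, f y = (2 : ℝ) ^ k := fun k y hy => by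
    have : h y = ((2 : ℝ≥0∞) ^ k) ^ q := by
      simp only [h]
      rw [tsum_eq_single k fun j hj => indicator_of_notMem
        (fun hyj => (hdisj hj).ne_of_mem hyj hy rfl) _, indicator_of_mem hy]
    simp [f, this, one_div, ENNReal.rpow_rpow_inv hq.ne']
  refine ⟨f, hf_meas, ?_, fun C hC => ?_⟩
  · exact (hφ.morreyNorm_le_of_rpow_le_tsum_indicator hq _ hρ₀ _ hf_le).trans_lt
      (ENNReal.rpow_lt_top_of_nonneg (by positivity) (tsum_rpow_two_pow_mul_lt_top hq hρφ).ne)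
  · obtain ⟨k, hk⟩ := pow_unbounded_of_one_lt C (by norm_num : (1 : ℝ) < 2)
    have hQ : Q k ⊆ {x | ¬ ‖f x‖ ≤ C} := fun y hy => by
      simp [hf_Q k y hy, hk]
    exact (measure_closedBall_pos volume _ (hρ₀ k)).ne' (measure_mono_null hQ (ae_iff.1 hC))

/-- for `φ ∈ G_q`, `inf_{t>0} φ(t) > 0` iff every `f` with finite
generalized Morrey norm is essentially bounded; moreover if `c > 0` is a lower
bound for `φ` on `(0,∞)` (in particular for `c = inf φ`), then
`‖f‖_{L^∞} ≤ c⁻¹ ‖f‖_{M^φ_q}` for every measurable `f`. -/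
theorem morrey_subset_Linfty_iff (n : ℕ) (q : ℝ) (hq : 0 < q)
    (φ : ℝ → ℝ) (hφ : IsGq n q φ) :
    ((∃ c : ℝ, 0 < c ∧ ∀ t, 0 < t → c ≤ φ t) ↔
      (∀ f : (Fin n → ℝ) → ℂ, Measurable f → morreyNorm n q φ f < ⊤ →
        ∃ C : ℝ, ∀ᵐ x ∂volume, ‖f x‖ ≤ C)) ∧
    (∀ c : ℝ, 0 < c → (∀ t, 0 < t → c ≤ φ t) →
      ∀ f : (Fin n → ℝ) → ℂ, Measurable f →
        essSup (fun x => (‖f x‖₊ : ℝ≥0∞)) volume ≤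
          (ENNReal.ofReal c)⁻¹ * morreyNorm n q φ f) := by
  refine ⟨⟨fun ⟨c, hc, hcφ⟩ f hf hfin => ?_, fun H => ?_⟩,
    fun c hc hcφ f hf => essSup_le_inv_mul_morreyNorm hq hc hcφ hf⟩
  · refine exists_ae_norm_le_of_essSup_ne_top
      (ne_top_of_le_ne_top ?_ (essSup_le_inv_mul_morreyNorm hq hc hcφ hf))
    exact ENNReal.mul_ne_top (ENNReal.inv_ne_top.2 (ENNReal.ofReal_pos.2 hc).ne') hfin.ne
  · by_contra! hinf
    rcases n.eq_zero_or_pos with rfl | hn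
    · obtain ⟨t, ht, hφt⟩ := hinf (φ 1) (hφ.1 1 one_pos)
      exact hφt.ne (hφ.apply_eq_of_dim_zero ht)
    · obtain ⟨f, hf, hfin, hunbdd⟩ := hφ.exists_not_ae_bounded hn hq hinf
      obtain ⟨C, hC⟩ := H f hf hfin
      exact hunbdd C hC
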